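/- Let E ⊆ ℝ^d be a nonempty bounded open set with complement K = ℝ^d \ E, and set K(h) = {x : dist(x,K) ≤ h}. Suppose the limit lim_{h→0+} ln|K(h) \ K| / ln h exists and equals d − d_X for some real number d_X. Then for every ε > 0 there exists δ > 0 such that for every unit vector v ∈ ℝ^d and every h with 0 < h < δ, τ(h,v,E) ≤ h^{d − d_X − ε}; consequently ω(χ_E, t)_1 := sup over unit vectors v and 0 < h ≤ t of ∫_{ℝ^d} |χ_E(x + hv) − χ_E(x)| dx satisfies ω(χ_E, t)_1 = O(t^{d − d_X − ε}) for every ε > 0. -/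

import Mathlib

open MeasureTheory Set

/-- `τ(h,v,E)` in `ℝ^d`: the measure of the set where the characteristic function of `E`
translated by `h·v` differs from itself. -/
noncomputable def tauRd (d : ℕ) (E : Set (EuclideanSpace ℝ (Fin d)))
    (v : EuclideanSpace ℝ (Fin d)) (h : ℝ) : ℝ :=
  (volume {x : EuclideanSpace ℝ (Fin d) |
    E.indicator (fun _ => (1:ℝ)) (x + h • v) ≠ E.indicator (fun _ => (1:ℝ)) x}).toReal

/-!
If `χ_E(x + w) ≠ χ_E(x)` then one of `x`, `x + w` lies in `E` within distance `‖w‖`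
of `Eᶜ`, i.e. in the inner layer `K(‖w‖) \ K`. By translation invariance of Lebesgue measure,
`τ(h,v,E) ≤ 2 |K(h) \ K|`, and the limit hypothesis gives `|K(h) \ K| ≤ h^(d - d_X - ε/2)` for
small `h`; the factor `2` is absorbed by `h^(ε/2)`. Monotonicity of `h ↦ |K(h) \ K|` turns the
pointwise bound into the bound on the modulus of continuity.
-/

open Filter Topology

/-- The paper's `K(r) \ K` for `K = Eᶜ`. -/
def innerLayer {X : Type*} [PseudoMetricSpace X] (E : Set X) (r : ℝ) : Set X :=
  {x | Metric.infDist x Eᶜ ≤ r} \ Eᶜ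

def indicatorShiftNe {X : Type*} [Add X] (E : Set X) (w : X) : Set X :=
  {x | E.indicator (fun _ => (1:ℝ)) (x + w) ≠ E.indicator (fun _ => (1:ℝ)) x}

theorem integral_abs_indicator_shift_sub {X : Type*} [Add X] [MeasurableSpace X]
    [MeasurableAdd X] (μ : Measure X) {E : Set X} (hE : MeasurableSet E) (w : X) :
    ∫ x, |E.indicator (fun _ => (1:ℝ)) (x + w) - E.indicator (fun _ => (1:ℝ)) x| ∂μ
      = μ.real (indicatorShiftNe E w) := by
  have hmeas : MeasurableSet (indicatorShiftNe E w) :=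
    (measurableSet_eq_fun ((measurable_const.indicator hE).comp (measurable_add_const w))
      (measurable_const.indicator hE)).compl
  rw [← integral_indicator_one hmeas]
  congr 1 with x
  by_cases hxE : x ∈ E <;> by_cases hyE : x + w ∈ E <;>
    simp [indicatorShiftNe, hxE, hyE]

section Layer

variable {X : Type*}

theorem innerLayer_subset [PseudoMetricSpace X] (E : Set X) (r : ℝ) : innerLayer E r ⊆ E :=
  fun _ hx => not_not.mp hx.2

theorem innerLayer_mono [PseudoMetricSpace X] (E : Set X) {r s : ℝ} (hrs : r ≤ s) :
    innerLayer E r ⊆ innerLayer E s :=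
  fun _ hx => ⟨le_trans hx.1 hrs, hx.2⟩

theorem indicatorShiftNe_subset [SeminormedAddCommGroup X] (E : Set X) (w : X) :
    indicatorShiftNe E w ⊆ innerLayer E ‖w‖ ∪ (· + w) ⁻¹' innerLayer E ‖w‖ := by
  intro x hx
  by_cases hxE : x ∈ E <;> by_cases hyE : x + w ∈ E
  · simp [indicatorShiftNe, hxE, hyE] at hx
  · exact .inl ⟨(Metric.infDist_le_dist_of_mem (show x + w ∈ Eᶜ from hyE)).trans_eq
      (dist_self_add_right w x), not_not.mpr hxE⟩
  · exact .inr ⟨(Metric.infDist_le_dist_of_mem (show x ∈ Eᶜ from hxE)).trans_eq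
      (by rw [dist_comm, dist_self_add_right]), not_not.mpr hyE⟩
  · simp [indicatorShiftNe, hxE, hyE] at hx

variable [SeminormedAddCommGroup X] [MeasurableSpace X] [MeasurableAdd X]
  (μ : Measure X) [μ.IsAddRightInvariant]

theorem measure_indicatorShiftNe_le (E : Set X) (w : X) :
    μ (indicatorShiftNe E w) ≤ 2 * μ (innerLayer E ‖w‖) :=
  calc μ (indicatorShiftNe E w)
      ≤ μ (innerLayer E ‖w‖ ∪ (· + w) ⁻¹' innerLayer E ‖w‖) :=
        measure_mono (indicatorShiftNe_subset E w)
    _ ≤ μ (innerLayer E ‖w‖) + μ ((· + w) ⁻¹' innerLayer E ‖w‖) := measure_union_le _ _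
    _ = 2 * μ (innerLayer E ‖w‖) := by rw [measure_preimage_add_right, two_mul]

theorem measureReal_indicatorShiftNe_le {E : Set X} (hE : μ E ≠ ⊤) (w : X) :
    μ.real (indicatorShiftNe E w) ≤ 2 * μ.real (innerLayer E ‖w‖) := by
  have hlayer : μ (innerLayer E ‖w‖) ≠ ⊤ :=
    measure_ne_top_of_subset (innerLayer_subset E _) hE
  calc μ.real (indicatorShiftNe E w) ≤ (2 * μ (innerLayer E ‖w‖)).toReal :=
        ENNReal.toReal_mono (ENNReal.mul_ne_top ENNReal.ofNat_ne_top hlayer)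
          (measure_indicatorShiftNe_le μ E w)
    _ = 2 * μ.real (innerLayer E ‖w‖) := by simp [measureReal_def]

end Layer

section LogRatio

variable {f : ℝ → ℝ} {L : ℝ}

theorem eventually_le_rpow_of_tendsto_log_div_log (hf : ∀ h, 0 ≤ f h)
    (hlim : Tendsto (fun h => Real.log (f h) / Real.log h) (𝓝[>] 0) (𝓝 L)) {β : ℝ}
    (hβ : β < L) : ∀ᶠ h in 𝓝[>] 0, f h ≤ h ^ β := by
  filter_upwards [hlim.eventually (eventually_gt_nhds hβ), Ioo_mem_nhdsGT zero_lt_one]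
    with h hratio ⟨hpos, hlt1⟩
  rcases (hf h).eq_or_lt with hzero | hfpos
  · rw [← hzero]; positivity
  · rw [Real.le_rpow_iff_log_le hfpos hpos]
    exact ((lt_div_iff_of_neg (Real.log_neg hpos hlt1)).mp hratio).le

theorem eventually_const_mul_le_rpow_of_tendsto_log_div_log (hf : ∀ h, 0 ≤ f h)
    (hlim : Tendsto (fun h => Real.log (f h) / Real.log h) (𝓝[>] 0) (𝓝 L))
    {c : ℝ} (hc : 0 ≤ c) {ε : ℝ} (hε : 0 < ε) :
    ∀ᶠ h in 𝓝[>] 0, c * f h ≤ h ^ (L - ε) := by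
  have hsmall : Tendsto (fun h : ℝ => c * h ^ (ε / 2)) (𝓝[>] 0) (𝓝 0) := by
    have := ((Real.continuousAt_rpow_const 0 (ε / 2) (.inr (by positivity))).tendsto.const_mul c)
    simpa [Real.zero_rpow (by positivity : ε / 2 ≠ 0)] using this.mono_left nhdsWithin_le_nhds
  filter_upwards [eventually_le_rpow_of_tendsto_log_div_log hf hlim (by linarith : L - ε / 2 < L),
    hsmall.eventually (eventually_le_nhds zero_lt_one), self_mem_nhdsWithin]
    with h hfh hch (hpos : 0 < h)
  calc c * f h ≤ c * h ^ (L - ε / 2) := by gcongr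
    _ = (c * h ^ (ε / 2)) * h ^ (L - ε) := by
        rw [mul_assoc, ← Real.rpow_add hpos]; ring_nf
    _ ≤ h ^ (L - ε) := mul_le_of_le_one_left (by positivity) hch

end LogRatio

theorem tauRd_eq (d : ℕ) (E : Set (EuclideanSpace ℝ (Fin d))) (v : EuclideanSpace ℝ (Fin d))
    (h : ℝ) : tauRd d E v h = volume.real (indicatorShiftNe E (h • v)) := rfl

theorem tauRd_le (d : ℕ) {E : Set (EuclideanSpace ℝ (Fin d))} (hEb : Bornology.IsBounded E)
    {v : EuclideanSpace ℝ (Fin d)} (hv : ‖v‖ = 1) {h : ℝ} (hh : 0 < h) :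
    tauRd d E v h ≤ 2 * volume.real (innerLayer E h) := by
  have hnorm : ‖h • v‖ = h := by rw [norm_smul, hv, Real.norm_of_nonneg hh.le, mul_one]
  simpa only [tauRd_eq, hnorm] using
    measureReal_indicatorShiftNe_le volume hEb.measure_lt_top.ne (h • v)

theorem stmt_18_general (d : ℕ) (E : Set (EuclideanSpace ℝ (Fin d)))
    (hEo : IsOpen E) (hEb : Bornology.IsBounded E) (dX : ℝ)
    (hlim : Tendsto (fun h : ℝ =>
        Real.log ((volume ({x : EuclideanSpace ℝ (Fin d) | Metric.infDist x Eᶜ ≤ h} \ Eᶜ)).toReal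
          ) / Real.log h)
      (nhdsWithin 0 (Set.Ioi 0)) (nhds ((d : ℝ) - dX))) :
    ∀ ε > (0:ℝ),
      (∃ δ > 0, ∀ v : EuclideanSpace ℝ (Fin d), ‖v‖ = 1 →
        ∀ h : ℝ, 0 < h → h < δ → tauRd d E v h ≤ h ^ ((d : ℝ) - dX - ε)) ∧
      (∃ C > 0, ∃ t₀ > 0, ∀ t : ℝ, 0 < t → t ≤ t₀ →
        (⨆ q : {q : EuclideanSpace ℝ (Fin d) × ℝ // ‖q.1‖ = 1 ∧ 0 < q.2 ∧ q.2 ≤ t},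
          ∫ x : EuclideanSpace ℝ (Fin d),
            |E.indicator (fun _ => (1:ℝ)) (x + q.1.2 • q.1.1)
              - E.indicator (fun _ => (1:ℝ)) x|)
          ≤ C * t ^ ((d : ℝ) - dX - ε)) := by
  intro ε hε
  obtain ⟨δ, hδ, hlayer⟩ := mem_nhdsGT_iff_exists_Ioo_subset.mp
    (eventually_const_mul_le_rpow_of_tendsto_log_div_log (fun _ => measureReal_nonneg) hlim
      zero_le_two hε)
  have hτ : ∀ v : EuclideanSpace ℝ (Fin d), ‖v‖ = 1 → ∀ h t : ℝ, 0 < h → h ≤ t → t < δ →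
      tauRd d E v h ≤ t ^ ((d : ℝ) - dX - ε) := fun v hv h t hh hht htδ =>
    calc tauRd d E v h ≤ 2 * volume.real (innerLayer E h) := tauRd_le d hEb hv hh
      _ ≤ 2 * volume.real (innerLayer E t) := by
          gcongr
          exacts [measure_ne_top_of_subset (innerLayer_subset E t) hEb.measure_lt_top.ne,
            innerLayer_mono E hht]
      _ ≤ t ^ ((d : ℝ) - dX - ε) := hlayer ⟨hh.trans_le hht, htδ⟩
  refine ⟨⟨δ, hδ, fun v hv h hh hhδ => hτ v hv h h hh le_rfl hhδ⟩,
    ⟨1, one_pos, δ / 2, half_pos hδ, fun t ht htδ => ?_⟩⟩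
  rw [one_mul]
  refine Real.iSup_le (fun ⟨⟨v, h⟩, hv, hh, hht⟩ => ?_) (by positivity)
  rw [integral_abs_indicator_shift_sub volume hEo.measurableSet, ← tauRd_eq]
  exact hτ v hv h t hh hht (by linarith)

open Filter in
/-- Let `E ⊆ ℝ^d` be nonempty bounded open with `K = Eᶜ`,
`K(h) = {x : dist(x,K) ≤ h}`, and suppose `lim_{h→0⁺} ln|K(h)\K| / ln h = d - d_X`. Then for
every `ε > 0` there is `δ > 0` such that `τ(h,v,E) ≤ h^{d-d_X-ε}` for every unit vector `v`
and `0 < h < δ`; consequently `ω(χ_E,t)_1 = sup_{‖v‖=1, 0<h≤t} ∫ |χ_E(x+hv) - χ_E(x)| dx`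
satisfies `ω(χ_E,t)_1 = O(t^{d-d_X-ε})`. -/
theorem stmt_18 (d : ℕ) (E : Set (EuclideanSpace ℝ (Fin d))) (hne : E.Nonempty)
    (hEo : IsOpen E) (hEb : Bornology.IsBounded E) (dX : ℝ)
    (hlim : Tendsto (fun h : ℝ =>
        Real.log ((volume ({x : EuclideanSpace ℝ (Fin d) | Metric.infDist x Eᶜ ≤ h} \ Eᶜ)).toReal
          ) / Real.log h)
      (nhdsWithin 0 (Set.Ioi 0)) (nhds ((d : ℝ) - dX))) :
    ∀ ε > (0:ℝ),
      (∃ δ > 0, ∀ v : EuclideanSpace ℝ (Fin d), ‖v‖ = 1 →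
        ∀ h : ℝ, 0 < h → h < δ → tauRd d E v h ≤ h ^ ((d : ℝ) - dX - ε)) ∧
      (∃ C > 0, ∃ t₀ > 0, ∀ t : ℝ, 0 < t → t ≤ t₀ →
        (⨆ q : {q : EuclideanSpace ℝ (Fin d) × ℝ // ‖q.1‖ = 1 ∧ 0 < q.2 ∧ q.2 ≤ t},
          ∫ x : EuclideanSpace ℝ (Fin d),
            |E.indicator (fun _ => (1:ℝ)) (x + q.1.2 • q.1.1)
              - E.indicator (fun _ => (1:ℝ)) x|)
          ≤ C * t ^ ((d : ℝ) - dX - ε)) :=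
  stmt_18_general d E hEo hEb dX hlim
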